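/- arXiv:math/9811138 — 2 statements merged into one kernel-verified Lean document; each statement's English description precedes it below -/
import Mathlib

section
/- Rigidified parallelogram: let a, b > 0 and suppose points A, B, C, D, E, F ∈ ℝ^n satisfy |A−B| = a, |C−D| = a, |A−C| = b, |B−D| = b, |E−F| = b, |A−E| = |B−E| = a/2, and |C−F| = |D−F| = a/2. Then E = (A+B)/2, F = (C+D)/2, and ABDC is a parallelogram, i.e., B − A = D − C. -/
/-!
Two points at distance `a / 2` from both ends of a segment of length `a` must be its midpoint,
so `E` and `F` are the midpoints of `AB` and `CD`. The distance between these midpoints is at most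
the mean of `|A - C|` and `|B - D|`, with equality in a strictly convex space only when
`A - C = B - D`; here that mean is `b = |E - F|`, which forces the parallelogram.
-/

section StrictConvex

variable {V P : Type*} [NormedAddCommGroup V] [NormedSpace ℝ V] [StrictConvexSpace ℝ V]
  [MetricSpace P] [NormedAddTorsor V P]

theorem vsub_eq_vsub_of_dist_midpoint_midpoint_eq {A B C D : P} (h : dist A C = dist B D)
    (hmid : dist (midpoint ℝ A B) (midpoint ℝ C D) = dist A C) : B -ᵥ A = D -ᵥ C := by
  have hnorm : ‖A -ᵥ C‖ = ‖B -ᵥ D‖ := by rwa [← dist_eq_norm_vsub, ← dist_eq_norm_vsub]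
  have hsum : ‖(A -ᵥ C) + (B -ᵥ D)‖ = ‖A -ᵥ C‖ + ‖B -ᵥ D‖ := by
    rw [dist_eq_norm_vsub V, dist_eq_norm_vsub V, midpoint_vsub_midpoint, midpoint_eq_smul_add,
      norm_smul, invOf_eq_inv, norm_inv, Real.norm_two] at hmid
    linarith
  rw [← sub_eq_zero, vsub_sub_vsub_comm, eq_of_norm_eq_of_norm_add_eq hnorm hsum, sub_self]

end StrictConvex

theorem stmt7_general {n : ℕ} (a b : ℝ)
    (A B C D E F : EuclideanSpace ℝ (Fin n))
    (hAB : dist A B = a) (hCD : dist C D = a)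
    (hAC : dist A C = b) (hBD : dist B D = b) (hEF : dist E F = b)
    (hAE : dist A E = a / 2) (hBE : dist B E = a / 2)
    (hCF : dist C F = a / 2) (hDF : dist D F = a / 2) :
    E = midpoint ℝ A B ∧ F = midpoint ℝ C D ∧ B - A = D - C := by
  have hE : E = midpoint ℝ A B :=
    eq_midpoint_of_dist_eq_half (by rw [hAB, hAE]) (by rw [dist_comm, hBE, hAB])
  have hF : F = midpoint ℝ C D :=
    eq_midpoint_of_dist_eq_half (by rw [hCD, hCF]) (by rw [dist_comm, hDF, hCD])
  refine ⟨hE, hF, ?_⟩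
  have hmid : dist (midpoint ℝ A B) (midpoint ℝ C D) = dist A C := by rw [← hE, ← hF, hEF, hAC]
  simpa only [vsub_eq_sub] using
    vsub_eq_vsub_of_dist_midpoint_midpoint_eq (hAC.trans hBD.symm) hmid

theorem stmt7 {n : ℕ} (a b : ℝ) (ha : 0 < a) (hb : 0 < b)
    (A B C D E F : EuclideanSpace ℝ (Fin n))
    (hAB : dist A B = a) (hCD : dist C D = a)
    (hAC : dist A C = b) (hBD : dist B D = b) (hEF : dist E F = b)
    (hAE : dist A E = a / 2) (hBE : dist B E = a / 2)
    (hCF : dist C F = a / 2) (hDF : dist D F = a / 2) :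
    E = midpoint ℝ A B ∧ F = midpoint ℝ C D ∧ B - A = D - C :=
  stmt7_general a b A B C D E F hAB hCD hAC hBD hEF hAE hBE hCF hDF
end

section
/- Every rank one linear map u : ℝ^n → ℝ^n can be written as a composition of orthogonal projections onto lines through the origin followed by scalar multiplication. More precisely, there exist one-dimensional subspaces L_1, ..., L_k (with k ≤ 3) and a scalar λ ∈ ℝ such that u = λ · P_{L_k} ∘ ⋯ ∘ P_{L_1}, where P_L denotes orthogonal projection onto L. -/
open scoped RealInnerProductSpace

theorem stmt17 {n : ℕ}
    (u : EuclideanSpace ℝ (Fin n) →ₗ[ℝ] EuclideanSpace ℝ (Fin n))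
    (hu : Module.finrank ℝ (LinearMap.range u) = 1) :
    ∃ k : ℕ, k ≤ 3 ∧ ∃ w : Fin k → EuclideanSpace ℝ (Fin n),
      (∀ i, ‖w i‖ = 1) ∧ ∃ lam : ℝ, ∀ x, u x = lam •
        ((List.ofFn fun i : Fin k =>
            fun y : EuclideanSpace ℝ (Fin n) => (inner ℝ y (w i) : ℝ) • w i).foldl
          (fun acc p => p ∘ acc) id) x := by
  obtain ⟨v, hvne, hv⟩ := finrank_eq_one_iff'.mp hu
  set v0 : EuclideanSpace ℝ (Fin n) := (v : EuclideanSpace ℝ (Fin n)) with hv0def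
  have hv0' : v0 ≠ 0 := fun h => hvne (Subtype.ext h)
  have hnv : ‖v0‖ ≠ 0 := norm_ne_zero_iff.mpr hv0'
  set a := (LinearMap.adjoint u) v0 with hadef
  have key : ∀ x, u x = (⟪x, a⟫ / ‖v0‖^2) • v0 := by
    intro x
    obtain ⟨c, hc⟩ := hv ⟨u x, LinearMap.mem_range_self u x⟩
    have hc' : u x = c • v0 := congrArg Subtype.val hc.symm
    have hinner : ⟪x, a⟫ = ⟪u x, v0⟫ := (LinearMap.adjoint_inner_right u x v0)
    rw [hc', hinner, hc', real_inner_smul_left, real_inner_self_eq_norm_sq]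
    field_simp
  have ha0 : a ≠ 0 := by
    intro h
    obtain ⟨y, hy⟩ := v.2
    apply hv0'
    rw [hv0def, ← hy, key y, h]
    simp
  have hna : ‖a‖ ≠ 0 := norm_ne_zero_iff.mpr ha0
  set w1 : EuclideanSpace ℝ (Fin n) := ‖a‖⁻¹ • a with hw1def
  set w2 : EuclideanSpace ℝ (Fin n) := ‖v0‖⁻¹ • v0 with hw2def
  have hw1 : ‖w1‖ = 1 := norm_smul_inv_norm ha0
  have hw2 : ‖w2‖ = 1 := norm_smul_inv_norm hv0'
  have haa : ⟪a, a⟫ = ‖a‖ * ‖a‖ := real_inner_self_eq_norm_mul_norm a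
  have hvv : ⟪v0, v0⟫ = ‖v0‖ * ‖v0‖ := real_inner_self_eq_norm_mul_norm v0
  by_cases ht : ⟪a, v0⟫ = 0
  · -- orthogonal case: k = 3
    have hva : ⟪v0, a⟫ = 0 := by rwa [real_inner_comm]
    have h2 : Real.sqrt 2 * Real.sqrt 2 = 2 := Real.mul_self_sqrt (by norm_num)
    have h2ne : Real.sqrt 2 ≠ 0 := by positivity
    set wm : EuclideanSpace ℝ (Fin n) := (Real.sqrt 2)⁻¹ • (w1 + w2) with hwmdef
    have hwm : ‖wm‖ = 1 := by
      have hn12 : ‖w1 + w2‖^2 = 2 := by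
        rw [norm_add_sq_real, hw1, hw2, hw1def, hw2def, real_inner_smul_left,
          real_inner_smul_right, ht]
        ring
      have : ‖w1 + w2‖ = Real.sqrt 2 := by
        rw [← Real.sqrt_sq (norm_nonneg _), hn12]
      rw [hwmdef, norm_smul, this, Real.norm_eq_abs, abs_inv,
        abs_of_pos (by positivity : (0:ℝ) < Real.sqrt 2), inv_mul_cancel₀ h2ne]
    refine ⟨3, le_refl 3, ![w1, wm, w2], ?_, 2 * ‖a‖ / ‖v0‖, ?_⟩
    · intro i; fin_cases i <;> simpa
    · intro x
      simp only [List.ofFn_succ, List.ofFn_zero, Fin.succ_zero_eq_one, List.foldl_cons,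
        List.foldl_nil, Function.comp, id, Matrix.cons_val_zero, Matrix.cons_val_one,
        Matrix.head_cons, Matrix.cons_val_succ]
      rw [key x]
      simp only [hw1def, hw2def, hwmdef, smul_add, inner_add_right, inner_add_left,
        real_inner_smul_left, real_inner_smul_right, smul_smul, haa, hvv, ht, hva]
      set p : ℝ := ⟪x, a⟫ with hp
      congr 1
      field_simp
      linear_combination (p * ‖v0‖^2 * ‖a‖^2) * h2
  · -- non-orthogonal case: k = 2
    refine ⟨2, by norm_num, ![w1, w2], ?_, ‖a‖^2 / ⟪a, v0⟫, ?_⟩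
    · intro i; fin_cases i <;> simpa
    · intro x
      simp only [List.ofFn_succ, List.ofFn_zero, Fin.succ_zero_eq_one, List.foldl_cons,
        List.foldl_nil, Function.comp, id, Matrix.cons_val_zero, Matrix.cons_val_one,
        Matrix.head_cons]
      rw [key x]
      simp only [hw1def, hw2def, real_inner_smul_left, real_inner_smul_right, smul_smul]
      set p : ℝ := ⟪x, a⟫ with hp
      set q : ℝ := ⟪a, v0⟫ with hq
      congr 1
      field_simp
end
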